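/- arXiv:2510.19235 — 2 statements merged into one kernel-verified Lean document; each statement's English description precedes it below -/
import Mathlib

section
/- Let F be a field, a ∈ F, and S ⊆ M_n(F). Then S is a core set if and only if S + aI = {A + aI : A ∈ S} is a core set. -/
open Polynomial

/-- `S ⊆ Mₙ(F)` is a core set if its null ideal `N(S)` (under right evaluation)
is a two-sided ideal of `Mₙ(F)[X]`. -/
def IsCoreSet {F : Type*} [Field F] {n : ℕ} (S : Set (Matrix (Fin n) (Fin n) F)) : Prop :=
  ∃ I : TwoSidedIdeal (Polynomial (Matrix (Fin n) (Fin n) F)),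
    (I : Set (Polynomial (Matrix (Fin n) (Fin n) F))) = {f | ∀ A ∈ S, f.eval A = 0}

section Aux

variable {R : Type*} [Ring R]

/-- If `c` is central, `(p * C c).eval A = p.eval A * c`. -/
lemma eval_mul_C_of_central (c : R) (hc : ∀ r : R, Commute c r) (p : R[X]) (A : R) :
    (p * C c).eval A = p.eval A * c := by
  induction p using Polynomial.induction_on' with
  | add p q hp hq => simp [add_mul, hp, hq]
  | monomial n b =>
      rw [show (monomial n b : R[X]) * C c = monomial n (b * c) by
        rw [← monomial_zero_left, monomial_mul_monomial, Nat.add_zero]]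
      simp [eval_monomial, mul_assoc, ((hc A).pow_right n).eq]

lemma eval_pow_X_add_C (c : R) (hc : ∀ r : R, Commute c r) (A : R) (k : ℕ) :
    ((X + C c) ^ k).eval A = (A + c) ^ k := by
  induction k with
  | zero => simp
  | succ k ih =>
      rw [pow_succ, pow_succ, mul_add, eval_add, eval_mul_X,
        eval_mul_C_of_central c hc, ih, mul_add]

/-- Substituting `X + C c` and then evaluating at `A` equals evaluating at `A + c`,
when `c` is central. -/
lemma eval_eval₂_X_add_C (c : R) (hc : ∀ r : R, Commute c r) (f : R[X]) (A : R) :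
    (f.eval₂ C (X + C c)).eval A = f.eval (A + c) := by
  induction f using Polynomial.induction_on' with
  | add p q hp hq => simp [eval₂_add, hp, hq]
  | monomial n b =>
      rw [eval₂_monomial, eval_C_mul, eval_pow_X_add_C c hc, eval_monomial]

/-- The substitution `X ↦ X + C c` as a ring hom, for central `c`. -/
noncomputable def substAdd (c : R) (hc : ∀ r : R, Commute c r) : R[X] →+* R[X] :=
  eval₂RingHom' C (X + C c) fun r => by
    refine Commute.add_right (commute_X (C r)).symm ?_
    rw [Commute, SemiconjBy, ← C_mul, ← C_mul, (hc r).eq]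

end Aux

lemma isCoreSet_aux {F : Type*} [Field F] {n : ℕ} (a : F)
    (S : Set (Matrix (Fin n) (Fin n) F)) (h : IsCoreSet S) :
    IsCoreSet ((fun A => A + a • (1 : Matrix (Fin n) (Fin n) F)) '' S) := by
  obtain ⟨I, hI⟩ := h
  set c : Matrix (Fin n) (Fin n) F := a • 1 with hc_def
  have hc : ∀ r : Matrix (Fin n) (Fin n) F, Commute c r := fun r => by
    simp [hc_def, Commute, SemiconjBy, smul_mul_assoc, mul_smul_comm]
  refine ⟨I.comap (substAdd c hc), ?_⟩
  ext f
  simp only [SetLike.mem_coe, TwoSidedIdeal.mem_comap, Set.mem_setOf_eq]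
  have hIm : ∀ g, g ∈ I ↔ ∀ A ∈ S, g.eval A = 0 := fun g => by
    rw [← SetLike.mem_coe, hI]; rfl
  rw [hIm]
  constructor
  · rintro hf B ⟨A, hA, rfl⟩
    rw [← eval_eval₂_X_add_C c hc f A]
    exact hf A hA
  · intro hf A hA
    rw [show (substAdd c hc) f = f.eval₂ C (X + C c) from rfl,
      eval_eval₂_X_add_C c hc f A]
    exact hf _ ⟨A, hA, rfl⟩

theorem isCoreSet_add_scalar_iff {F : Type*} [Field F] {n : ℕ} (a : F)
    (S : Set (Matrix (Fin n) (Fin n) F)) :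
    IsCoreSet S ↔ IsCoreSet ((fun A => A + a • (1 : Matrix (Fin n) (Fin n) F)) '' S) := by
  constructor
  · exact isCoreSet_aux a S
  · intro h
    have := isCoreSet_aux (-a) _ h
    convert this using 2
    ext B
    constructor
    · intro hB
      exact ⟨B + a • 1, ⟨B, hB, rfl⟩, by simp [neg_smul]⟩
    · rintro ⟨_, ⟨A, hA, rfl⟩, rfl⟩
      simpa [neg_smul] using hA
end

section
/- Let F be a perfect field, m ∈ F[X] a monic irreducible polynomial of degree s ≥ 2 with splitting field K and roots α_1, ..., α_s ∈ K, and μ ∈ F[X] divisible by m with μ(A) = 0 for all A in a nonempty set S ⊆ M_n(F). For each i, let f_{α_i} = μ/(X - α_i) ∈ K[X] and B_K(A, f_{α_i}) = {B ∈ M_n(K) : B · f_{α_i}(A) = 0}. Then for any indices i, j, the intersection ⋂_{A∈S} B_K(A, f_{α_i}) is zero if and only if ⋂_{A∈S} B_K(A, f_{α_j}) is zero. -/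
open Polynomial

private lemma aux_map_aeval {n : ℕ} {K : Type*} [Field K] (σ : K →+* K)
    (M : Matrix (Fin n) (Fin n) K) (p : Polynomial K) :
    (Polynomial.aeval M p).map σ = Polynomial.aeval (M.map σ) (p.map σ) := by
  have h := Polynomial.hom_eval₂ p (algebraMap K (Matrix (Fin n) (Fin n) K))
      (σ.mapMatrix) M
  rw [Polynomial.aeval_def, Polynomial.aeval_def]
  have : (Polynomial.eval₂ (algebraMap K (Matrix (Fin n) (Fin n) K)) M p).map σ
      = σ.mapMatrix (Polynomial.eval₂ (algebraMap K (Matrix (Fin n) (Fin n) K)) M p) := rfl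
  have hcomp : (σ.mapMatrix : Matrix (Fin n) (Fin n) K →+* Matrix (Fin n) (Fin n) K).comp
      (algebraMap K (Matrix (Fin n) (Fin n) K))
      = (algebraMap K (Matrix (Fin n) (Fin n) K)).comp σ := by
    refine RingHom.ext fun x => ?_
    ext i j
    simp [Matrix.algebraMap_matrix_apply, apply_ite σ]
  rw [this, h, hcomp, ← Polynomial.eval₂_map]
  rfl

private lemma aux_dir {F : Type*} [Field F] {n : ℕ}
    {K : Type*} [Field K] [Algebra F K] (σ : K ≃ₐ[F] K)
    (S : Set (Matrix (Fin n) (Fin n) F))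
    (fαi fαj : Polynomial K)
    (hmap : fαi.map (σ : K →+* K) = fαj)
    (hj : ∀ B : Matrix (Fin n) (Fin n) K,
        (∀ A ∈ S, B * Polynomial.aeval (A.map (algebraMap F K)) fαj = 0) → B = 0) :
    ∀ B : Matrix (Fin n) (Fin n) K,
        (∀ A ∈ S, B * Polynomial.aeval (A.map (algebraMap F K)) fαi = 0) → B = 0 := by
  intro B hB
  have hB' : (B.map (σ : K →+* K)) = 0 := by
    apply hj
    intro A hA
    have h1 := hB A hA
    have h2 : ((B * Polynomial.aeval (A.map (algebraMap F K)) fαi).map (σ : K →+* K)) = 0 := by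
      rw [h1]; ext i j; simp
    rw [Matrix.map_mul, aux_map_aeval] at h2
    have h3 : (A.map (algebraMap F K)).map (σ : K →+* K) = A.map (algebraMap F K) := by
      ext i j; simp
    rwa [h3, hmap] at h2
  ext i j
  have h4 : σ (B i j) = 0 := by
    have := congrFun (congrFun hB' i) j
    simpa [Matrix.map_apply] using this
  simpa using (map_eq_zero_iff σ σ.injective).mp h4

theorem null_trivial_root_independent {F : Type*} [Field F] [PerfectField F] {n : ℕ}
    (m : Polynomial F) (hm : Irreducible m) (hmonic : m.Monic) (hs : 2 ≤ m.natDegree)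
    (K : Type*) [Field K] [Algebra F K] (hK : Polynomial.IsSplittingField F K m)
    (αi αj : K) (hαi : Polynomial.aeval αi m = 0) (hαj : Polynomial.aeval αj m = 0)
    (μ : Polynomial F) (hdvd : m ∣ μ)
    (S : Set (Matrix (Fin n) (Fin n) F)) (hS : S.Nonempty)
    (hann : ∀ A ∈ S, Polynomial.aeval A μ = 0)
    (fαi fαj : Polynomial K)
    (hi : μ.map (algebraMap F K) = (X - C αi) * fαi)
    (hj : μ.map (algebraMap F K) = (X - C αj) * fαj) :
    ((∀ B : Matrix (Fin n) (Fin n) K,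
        (∀ A ∈ S, B * Polynomial.aeval (A.map (algebraMap F K)) fαi = 0) → B = 0) ↔
     (∀ B : Matrix (Fin n) (Fin n) K,
        (∀ A ∈ S, B * Polynomial.aeval (A.map (algebraMap F K)) fαj = 0) → B = 0)) := by
  by_cases hμ : μ = 0
  · subst hμ
    simp only [Polynomial.map_zero] at hi hj
    have hXi : (X - C αi : Polynomial K) ≠ 0 := X_sub_C_ne_zero αi
    have hXj : (X - C αj : Polynomial K) ≠ 0 := X_sub_C_ne_zero αj
    have hfi : fαi = 0 := by
      rcases mul_eq_zero.mp hi.symm with h | h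
      · exact absurd h hXi
      · exact h
    have hfj : fαj = 0 := by
      rcases mul_eq_zero.mp hj.symm with h | h
      · exact absurd h hXj
      · exact h
    rw [hfi, hfj]
  · have hNormal : Normal F K := Normal.of_isSplittingField m
    have hminj : minpoly F αj = m := by
      exact (minpoly.eq_of_irreducible_of_monic hm hαj hmonic).symm
    have hmini : minpoly F αi = m := by
      exact (minpoly.eq_of_irreducible_of_monic hm hαi hmonic).symm
    have key : ∀ (x y : K) (fx fy : Polynomial K),
        μ.map (algebraMap F K) = (X - C x) * fx →
        μ.map (algebraMap F K) = (X - C y) * fy →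
        (σ : K ≃ₐ[F] K) → σ x = y → fx.map (σ : K →+* K) = fy := by
      intro x y fx fy hx hy σ hσ
      have hμK : μ.map (algebraMap F K) ≠ 0 := by
        simpa using hμ
      have h1 : (μ.map (algebraMap F K)).map (σ : K →+* K) = μ.map (algebraMap F K) := by
        rw [Polynomial.map_map]
        congr 1
        ext a
        simp
      have h2 : μ.map (algebraMap F K) = (X - C y) * fx.map (σ : K →+* K) := by
        conv_lhs => rw [← h1, hx]
        have hσ' : (σ : K →+* K) x = y := hσ
        rw [Polynomial.map_mul, Polynomial.map_sub, Polynomial.map_X, Polynomial.map_C, hσ']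
      rw [h2] at hy
      exact (mul_left_cancel₀ (X_sub_C_ne_zero y) hy.symm).symm
    constructor
    · intro hLHS
      obtain ⟨σ, hσ⟩ := minpoly.exists_algEquiv_of_root (K := F) (L := K)
        ⟨m, hmonic.ne_zero, hαi⟩ (by rw [hmini]; exact hαj)
      -- σ αj = αi
      exact aux_dir σ S fαj fαi (key αj αi fαj fαi hj hi σ hσ) hLHS
    · intro hRHS
      obtain ⟨σ, hσ⟩ := minpoly.exists_algEquiv_of_root (K := F) (L := K)
        ⟨m, hmonic.ne_zero, hαj⟩ (by rw [hminj]; exact hαi)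
      exact aux_dir σ S fαi fαj (key αi αj fαi fαj hi hj σ hσ) hRHS
end
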